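/- Let s be a square root on an MV-algebra M. Then M is a Boolean algebra (every element is idempotent) if and only if s(0) = 0; in that case s is the identity map. -/
import Mathlib


class MVAlg (M : Type*) where
  add : M → M → M
  compl : M → M
  zero : M
  one : M
  add_comm : ∀ x y, add x y = add y x
  add_assoc : ∀ x y z, add (add x y) z = add x (add y z)
  add_zero : ∀ x, add x zero = x
  compl_compl : ∀ x, compl (compl x) = x
  add_one : ∀ x, add x one = one
  chang : ∀ x y, add x (compl (add x (compl y))) = add y (compl (add y (compl x)))
  compl_zero : compl zero = one

namespace MVAlg

variable {M : Type*} [MVAlg M]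

/-- x ⊙ y := (x' ⊕ y')' -/
def odot (x y : M) : M := compl (add (compl x) (compl y))

/-- x ≤ y iff x' ⊕ y = 1 -/
def le (x y : M) : Prop := add (compl x) y = one

/-- x ∧ y := x ⊙ (x' ⊕ y) -/
def inf (x y : M) : M := odot x (add (compl x) y)

/-- x ∨ y := (x ⊙ y') ⊕ y -/
def sup (x y : M) : M := add (odot x (compl y)) y

/-- x ⊖ y := x ⊙ y' -/
def sub (x y : M) : M := odot x (compl y)

/-- A square root on an MV-algebra. -/
def IsSquareRoot (s : M → M) : Prop :=
  (∀ x : M, odot (s x) (s x) = x) ∧ ∀ x y : M, le (odot y y) x → le y (s x)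

end MVAlg

namespace MVAux

open MVAlg

variable {M : Type*} [MVAlg M]

instance : Std.Commutative (α := M) MVAlg.add := ⟨MVAlg.add_comm⟩
instance : Std.Associative (α := M) MVAlg.add := ⟨MVAlg.add_assoc⟩

lemma compl_one : compl (one : M) = zero := by
  rw [← MVAlg.compl_zero, MVAlg.compl_compl]

lemma one_add (x : M) : add one x = one := by rw [MVAlg.add_comm, MVAlg.add_one]
lemma zero_add (x : M) : add zero x = x := by rw [MVAlg.add_comm, MVAlg.add_zero]

lemma add_compl (x : M) : add x (compl x) = one := by
  have h := MVAlg.chang x (one : M)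
  rwa [compl_one, MVAlg.add_zero, one_add] at h

lemma compl_add (x : M) : add (compl x) x = one := by
  rw [MVAlg.add_comm, add_compl]

lemma le_refl (x : M) : le x x := compl_add x

lemma le_zero {y : M} (h : le y zero) : y = zero := by
  unfold le at h
  rw [MVAlg.add_zero] at h
  rw [← MVAlg.compl_compl y, h, compl_one]

lemma le_antisymm {x y : M} (hxy : le x y) (hyx : le y x) : x = y := by
  unfold le at hxy hyx
  have h := MVAlg.chang x y
  rw [MVAlg.add_comm x (compl y)] at h
  rw [MVAlg.add_comm y (compl x)] at h
  rw [hxy, hyx, compl_one, MVAlg.add_zero, MVAlg.add_zero] at h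
  exact h

lemma add_le_add_left {a b : M} (h : le a b) (c : M) : le (add c a) (add c b) := by
  unfold le at h ⊢
  have hb : b = add a (compl (add a (compl b))) := by
    have hc := MVAlg.chang a b
    rw [MVAlg.add_comm b (compl a), h, compl_one, MVAlg.add_zero] at hc
    exact hc.symm
  rw [hb]
  have h2 : add (compl (add c a)) (add c (add a (compl (add a (compl b))))) =
      add (add (compl (add c a)) (add c a)) (compl (add a (compl b))) := by ac_rfl
  rw [h2, compl_add, one_add]

lemma le_trans {a b c : M} (hab : le a b) (hbc : le b c) : le a c := by
  have h := add_le_add_left hbc (compl a)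
  unfold le at hab h ⊢
  rw [hab, compl_one, zero_add] at h
  exact h

lemma compl_le_compl {a b : M} (h : le a b) : le (compl b) (compl a) := by
  unfold le at h ⊢
  rw [MVAlg.compl_compl, MVAlg.add_comm]
  exact h

lemma add_le_add_right {a b : M} (h : le a b) (c : M) : le (add a c) (add b c) := by
  rw [MVAlg.add_comm a c, MVAlg.add_comm b c]
  exact add_le_add_left h c

lemma odot_le_left (a b : M) : le (odot a b) a := by
  unfold le odot
  rw [MVAlg.compl_compl]
  have : add (add (compl a) (compl b)) a = add (add (compl a) a) (compl b) := by ac_rfl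
  rw [this, compl_add, one_add]

lemma odot_le_odot_left {a b : M} (h : le a b) (c : M) : le (odot a c) (odot b c) := by
  unfold odot
  apply compl_le_compl
  exact add_le_add_right (compl_le_compl h) (compl c)

lemma odot_le_odot_right {a b : M} (h : le a b) (c : M) : le (odot c a) (odot c b) := by
  unfold odot
  apply compl_le_compl
  exact add_le_add_left (compl_le_compl h) (compl c)

end MVAux

section Main

open MVAlg MVAux

variable {M : Type*} [MVAlg M]

lemma odot_self_of_add_idem (h : ∀ x : M, add x x = x) (x : M) : odot x x = x := by
  unfold odot
  rw [h (compl x), MVAlg.compl_compl]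

lemma odot_compl_self (x : M) : odot x (compl x) = zero := by
  unfold odot
  rw [MVAlg.compl_compl, compl_add, compl_one]

lemma odot_idem_of_sqrt_zero {s : M → M} (hs : MVAlg.IsSquareRoot s)
    (h0 : s MVAlg.zero = MVAlg.zero) (x : M) : odot x x = x := by
  set d := odot x (compl (odot x x)) with hd
  have h1 : le d x := odot_le_left x (compl (odot x x))
  have h2 : le d (compl x) := by
    unfold le
    rw [hd]
    unfold odot
    rw [MVAlg.compl_compl, MVAlg.compl_compl]
    have : add (add (compl x) (compl (add (compl x) (compl x)))) (compl x) =
        add (add (compl x) (compl x)) (compl (add (compl x) (compl x))) := by ac_rfl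
    rw [this, add_compl]
  have hdd : le (odot d d) zero := by
    have s1 : le (odot d d) (odot x d) := odot_le_odot_left h1 d
    have s2 : le (odot x d) (odot x (compl x)) := odot_le_odot_right h2 x
    have s3 := le_trans s1 s2
    rwa [odot_compl_self] at s3
  have hd0 : d = zero := by
    have := hs.2 zero d hdd
    rw [h0] at this
    exact le_zero this
  have hxle : le x (odot x x) := by
    unfold le
    have : compl d = add (compl x) (odot x x) := by
      rw [hd]
      unfold odot
      rw [MVAlg.compl_compl, MVAlg.compl_compl]
    rw [← this, hd0, MVAlg.compl_zero]
  exact le_antisymm (odot_le_left x x) hxle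

end Main

theorem boolean_iff_sqrt_zero {M : Type*} [MVAlg M] (s : M → M)
    (hs : MVAlg.IsSquareRoot s) :
    ((∀ x : M, MVAlg.add x x = x) ↔ s MVAlg.zero = MVAlg.zero) ∧
    (s MVAlg.zero = MVAlg.zero → ∀ x : M, s x = x) := by
  open MVAlg MVAux in
  constructor
  · constructor
    · intro h
      have := hs.1 zero
      rwa [odot_self_of_add_idem h] at this
    · intro h0 x
      have hidem := odot_idem_of_sqrt_zero hs h0
      have : add x x = compl (odot (compl x) (compl x)) := by
        unfold odot
        rw [MVAlg.compl_compl, MVAlg.compl_compl]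
      rw [this, hidem, MVAlg.compl_compl]
  · intro h0 x
    have hidem := odot_idem_of_sqrt_zero hs h0
    have := hs.1 x
    rw [hidem (s x)] at this
    exact this
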